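/- arXiv:1303.6262 — 6 statements merged into one kernel-verified Lean document; each statement's English description precedes it below -/
import Mathlib

section
/- Let Λ be a subset of a compact interval [a,b] ⊂ ℝ that is well-ordered by <, with min Λ = a and max Λ = b, and such that for every γ ∈ Λ with a < γ one has γ = sup {S(β) : β ∈ Λ, β < γ} (where S denotes the successor in Λ, extended by S(b) = b). Then [a,b) is the disjoint union of the half-open intervals [β, S(β)) over β ∈ Λ with β < b. -/
/-- If `Λ ⊆ [a,b]` is well ordered with `min Λ = a`, `max Λ = b`, successor
function `S` (with `S b = b`), and every `γ ∈ Λ` with `a < γ` satisfies the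
sup-closure condition, then `[a,b)` is the disjoint union of the half-open
intervals `[β, S β)`, `β ∈ Λ \ {b}`. -/
theorem Ico_eq_disjoint_union_of_wellOrdered (a b : ℝ) (hab : a < b)
    (Λ : Set ℝ) (hΛ : Λ ⊆ Set.Icc a b)
    (hwo : ∀ s : Set ℝ, s ⊆ Λ → s.Nonempty → ∃ m ∈ s, ∀ x ∈ s, m ≤ x)
    (ha : a ∈ Λ) (hb : b ∈ Λ)
    (hmin : ∀ x ∈ Λ, a ≤ x) (hmax : ∀ x ∈ Λ, x ≤ b)
    (S : ℝ → ℝ)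
    (hS : ∀ β ∈ Λ, β ≠ b → S β ∈ Λ ∧ β < S β ∧ ∀ x ∈ Λ, β < x → S β ≤ x)
    (hSb : S b = b)
    (hsup : ∀ γ ∈ Λ, a < γ → γ = sSup {x | ∃ β ∈ Λ, β < γ ∧ x = S β}) :
    (Set.Ico a b = ⋃ β ∈ Λ \ {b}, Set.Ico β (S β)) ∧
      Set.PairwiseDisjoint (Λ \ {b}) (fun β => Set.Ico β (S β)) := by
  constructor
  · ext x
    simp only [Set.mem_Ico, Set.mem_iUnion, Set.mem_diff, Set.mem_singleton_iff,
      exists_prop]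
    constructor
    · rintro ⟨hax, hxb⟩
      -- least element γ of Λ strictly above x
      obtain ⟨γ, ⟨hγΛ, hxγ⟩, hγmin⟩ :=
        hwo {y | y ∈ Λ ∧ x < y} (fun y hy => hy.1) ⟨b, hb, hxb⟩
      have haγ : a < γ := lt_of_le_of_lt hax hxγ
      have hsupγ := hsup γ hγΛ haγ
      -- find β ∈ Λ, β < γ with x < S β
      by_contra hcon
      push_neg at hcon
      have hle : ∀ y ∈ {x | ∃ β ∈ Λ, β < γ ∧ x = S β}, y ≤ x := by
        rintro y ⟨β, hβΛ, hβγ, rfl⟩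
        have hβx : β ≤ x := by
          by_contra h
          exact absurd (hγmin β ⟨hβΛ, not_le.mp h⟩) (not_le.mpr hβγ)
        have hβb : β ≠ b := fun h => absurd hxb (not_lt.mpr (h ▸ hβx))
        exact hcon β ⟨hβΛ, hβb⟩ hβx
      have hne : ({x | ∃ β ∈ Λ, β < γ ∧ x = S β}).Nonempty := ⟨S a, a, ha, haγ, rfl⟩
      have : γ ≤ x := hsupγ ▸ csSup_le hne hle
      exact absurd hxγ (not_lt.mpr this)
    · rintro ⟨β, ⟨hβΛ, hβb⟩, hβx, hxS⟩
      obtain ⟨hSΛ, -, -⟩ := hS β hβΛ hβb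
      exact ⟨le_trans (hmin β hβΛ) hβx, lt_of_lt_of_le hxS (hmax _ hSΛ)⟩
  · intro β hβ β' hβ' hne
    rcases hβ with ⟨hβΛ, hβb⟩
    rcases hβ' with ⟨hβ'Λ, hβ'b⟩
    rw [Set.mem_singleton_iff] at hβb hβ'b
    wlog hlt : β < β' generalizing β β'
    · exact (this hne.symm hβ'Λ hβ'b hβΛ hβb (lt_of_le_of_ne (not_lt.mp hlt) hne.symm)).symm
    obtain ⟨-, -, hSle⟩ := hS β hβΛ hβb
    have h : S β ≤ β' := hSle β' hβ'Λ hlt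
    simp only [Set.disjoint_left, Set.mem_Ico]
    rintro x ⟨-, hxS⟩ ⟨hβ'x, -⟩
    exact absurd (lt_of_lt_of_le hxS (le_trans h hβ'x)) (lt_irrefl x)
end

section
/- Let g : [a,b] → E be a right regulated mapping on a compact real interval with values in a Banach space E, i.e., g has a right limit at every point of [a,b). Then for every ε > 0 there exists a subset Λ of [a,b], well-ordered by <, with min Λ = a and max Λ = b, such that [a,b) is the disjoint union of the intervals [β, S(β)) for β ∈ Λ \ {b} (S the successor in Λ), and ‖g(s) − g(t)‖ ≤ ε whenever s, t ∈ (β, S(β)) for some β ∈ Λ \ {b}. -/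
/-!
Right regulatedness gives every `x ∈ [a,b)` a point `S x ∈ (x,b]` such that `g` oscillates by at
most `ε` on `(x, S x)`. Iterating `S` transfinitely from `a`, with suprema at limit stages, yields
a monotone family of points of `[a,b]` indexed by the ordinals. It reaches `b`, since no map from
all ordinals into `ℝ` is strictly increasing. Its range `Λ` is well ordered as a monotone image of
a well order, `S` is the successor in `Λ`, and the first stage beyond a point `x ∈ [a,b)` is a
successor stage `S β` with `β ≤ x`.
-/

open Set Filter Topology

universe u

theorem exists_Ioc_forall_dist_lt_of_tendsto_nhdsGT {α X : Type*} [LinearOrder α]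
    [TopologicalSpace α] [OrderTopology α] [PseudoMetricSpace X] {f : α → X} {x b : α} {L : X}
    (hf : Tendsto f (𝓝[>] x) (𝓝 L)) (hxb : x < b) {ε : ℝ} (hε : 0 < ε) :
    ∃ y ∈ Ioc x b, ∀ s ∈ Ioo x y, ∀ t ∈ Ioo x y, dist (f s) (f t) < ε := by
  have hnear : ∀ᶠ s in 𝓝[>] x, dist (f s) L < ε / 2 :=
    Metric.tendsto_nhds.1 hf _ (half_pos hε)
  obtain ⟨y, hy, hsub⟩ := (mem_nhdsGT_iff_exists_mem_Ioc_Ioo_subset hxb).1 hnear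
  refine ⟨y, hy, fun s hs t ht => ?_⟩
  calc dist (f s) (f t) ≤ dist (f s) L + dist (f t) L := dist_triangle_right _ _ _
    _ < ε / 2 + ε / 2 := add_lt_add (hsub hs) (hsub ht)
    _ = ε := add_halves ε

theorem Monotone.isWF_range {ι α : Type*} [LinearOrder ι] [WellFoundedLT ι] [Preorder α]
    {f : ι → α} (hf : Monotone f) : (range f).IsWF :=
  wellFoundedOn_range.2 <| Subrelation.wf (fun hlt => hf.reflect_lt hlt) wellFounded_lt

theorem pairwiseDisjoint_Ico_of_le_of_lt {α : Type*} [LinearOrder α] {s : Set α} {S : α → α}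
    (hS : ∀ β ∈ s, ∀ γ ∈ s, β < γ → S β ≤ γ) :
    s.PairwiseDisjoint fun β => Ico β (S β) := by
  have hlt : ∀ β ∈ s, ∀ γ ∈ s, β < γ → Disjoint (Ico β (S β)) (Ico γ (S γ)) :=
    fun β hβ γ hγ hβγ =>
      Ico_disjoint_Ico_same.mono_right (Ico_subset_Ico_left (hS β hβ γ hγ hβγ))
  intro β hβ γ hγ hne
  rcases hne.lt_or_gt with hβγ | hγβ
  exacts [hlt β hβ γ hγ hβγ, (hlt γ hγ β hβ hγβ).symm]

section TransfiniteIter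

variable {α : Type u} [ConditionallyCompleteLinearOrder α]

noncomputable def transfiniteIter (f : α → α) (a b : α) (o : Ordinal.{u}) : α :=
  Ordinal.limitRecOn o a (fun _ x => if x < b then f x else b)
    fun o _ ih => ⨆ p : Iio o, ih p p.2

variable {f : α → α} {a b : α}

@[simp]
theorem transfiniteIter_zero : transfiniteIter f a b 0 = a :=
  Ordinal.limitRecOn_zero ..

theorem transfiniteIter_add_one (o : Ordinal.{u}) :
    transfiniteIter f a b (o + 1) =
      if transfiniteIter f a b o < b then f (transfiniteIter f a b o) else b :=
  Ordinal.limitRecOn_add_one ..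

theorem transfiniteIter_add_one_of_lt {o : Ordinal.{u}} (hlt : transfiniteIter f a b o < b) :
    transfiniteIter f a b (o + 1) = f (transfiniteIter f a b o) := by
  rw [transfiniteIter_add_one, if_pos hlt]

theorem transfiniteIter_limit {o : Ordinal.{u}} (ho : Order.IsSuccLimit o) :
    transfiniteIter f a b o = ⨆ p : Iio o, transfiniteIter f a b p :=
  Ordinal.limitRecOn_limit _ _ _ _ ho

theorem transfiniteIter_mem_Icc (hab : a ≤ b) (hf : ∀ x ∈ Ico a b, f x ∈ Ioc x b)
    (o : Ordinal.{u}) : transfiniteIter f a b o ∈ Icc a b := by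
  induction o using Ordinal.limitRecOn with
  | zero => simpa using hab
  | add_one o ih =>
    rw [transfiniteIter_add_one]
    split_ifs with hlt
    · have hstep := hf _ ⟨ih.1, hlt⟩
      exact ⟨ih.1.trans hstep.1.le, hstep.2⟩
    · exact right_mem_Icc.2 hab
  | limit o ho ih =>
    have hbdd : BddAbove (range fun p : Iio o => transfiniteIter f a b p) :=
      ⟨b, forall_mem_range.2 fun p => (ih p p.2).2⟩
    have : Nonempty (Iio o) := ⟨⟨0, ho.bot_lt⟩⟩
    rw [transfiniteIter_limit ho]
    exact ⟨by simpa using le_ciSup hbdd ⟨0, ho.bot_lt⟩, ciSup_le fun p => (ih p p.2).2⟩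

theorem transfiniteIter_monotone (hab : a ≤ b) (hf : ∀ x ∈ Ico a b, f x ∈ Ioc x b) :
    Monotone (transfiniteIter f a b) := by
  intro p o hpo
  induction o using Ordinal.limitRecOn with
  | zero => rw [nonpos_iff_eq_zero.1 hpo]
  | add_one o ih =>
    rcases hpo.lt_or_eq with hlt | rfl
    · refine (ih (Order.lt_add_one_iff.1 hlt)).trans ?_
      rw [transfiniteIter_add_one]
      split_ifs with hb
      · exact (hf _ ⟨(transfiniteIter_mem_Icc hab hf o).1, hb⟩).1.le
      · exact (transfiniteIter_mem_Icc hab hf o).2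
    · rfl
  | limit o ho _ =>
    rcases hpo.lt_or_eq with hlt | rfl
    · rw [transfiniteIter_limit ho]
      exact le_ciSup (f := fun q : Iio o => transfiniteIter f a b q)
        ⟨b, forall_mem_range.2 fun q => (transfiniteIter_mem_Icc hab hf q).2⟩ ⟨p, hlt⟩
    · rfl

theorem exists_transfiniteIter_eq_right (hab : a ≤ b) (hf : ∀ x ∈ Ico a b, f x ∈ Ioc x b) :
    ∃ o, transfiniteIter f a b o = b := by
  by_contra! hne
  have hlt : ∀ o, transfiniteIter f a b o < b :=
    fun o => (transfiniteIter_mem_Icc hab hf o).2.lt_of_ne (hne o)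
  refine not_injective_of_ordinal _
    (StrictMono.injective (f := transfiniteIter f a b) fun p o hpo => ?_)
  calc transfiniteIter f a b p < transfiniteIter f a b (p + 1) := by
        rw [transfiniteIter_add_one_of_lt (hlt p)]
        exact (hf _ ⟨(transfiniteIter_mem_Icc hab hf p).1, hlt p⟩).1
    _ ≤ transfiniteIter f a b o :=
        transfiniteIter_monotone hab hf (Order.add_one_le_of_lt hpo)

theorem apply_mem_range_transfiniteIter {β : α} (hβ : β ∈ range (transfiniteIter f a b))
    (hβb : β < b) : f β ∈ range (transfiniteIter f a b) := by
  obtain ⟨o, rfl⟩ := hβ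
  exact ⟨o + 1, transfiniteIter_add_one_of_lt hβb⟩

theorem apply_le_of_mem_range_transfiniteIter (hab : a ≤ b)
    (hf : ∀ x ∈ Ico a b, f x ∈ Ioc x b) {β γ : α} (hβ : β ∈ range (transfiniteIter f a b))
    (hβb : β < b) (hγ : γ ∈ range (transfiniteIter f a b)) (hβγ : β < γ) : f β ≤ γ := by
  obtain ⟨o, rfl⟩ := hβ
  obtain ⟨o', rfl⟩ := hγ
  rw [← transfiniteIter_add_one_of_lt hβb]
  exact transfiniteIter_monotone hab hf
    (Order.add_one_le_of_lt ((transfiniteIter_monotone hab hf).reflect_lt hβγ))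

theorem Ico_eq_biUnion_transfiniteIter (hab : a ≤ b) (hf : ∀ x ∈ Ico a b, f x ∈ Ioc x b) :
    Ico a b = ⋃ β ∈ range (transfiniteIter f a b) \ {b}, Ico β (f β) := by
  ext x
  simp only [mem_iUnion, exists_prop]
  constructor
  · intro hx
    obtain ⟨θ, hθ⟩ := exists_transfiniteIter_eq_right hab hf
    obtain ⟨o, ho, hmin⟩ := wellFounded_lt.has_min {o | x < transfiniteIter f a b o}
      ⟨θ, show x < _ by rw [hθ]; exact hx.2⟩
    have hbelow : ∀ p < o, transfiniteIter f a b p ≤ x :=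
      fun p hp => not_lt.1 fun hxp => hmin p hxp hp
    induction o using Ordinal.limitRecOn with
    | zero => exact absurd hx.1 (by simpa using ho)
    | add_one p _ =>
      have hpx := hbelow p (Order.lt_add_one_iff.2 le_rfl)
      have hpb := hpx.trans_lt hx.2
      refine ⟨_, ⟨mem_range_self p, hpb.ne⟩, hpx, ?_⟩
      rwa [← transfiniteIter_add_one_of_lt hpb]
    | limit o ho' _ =>
      have : Nonempty (Iio o) := ⟨⟨0, ho'.bot_lt⟩⟩
      have hxo : x < ⨆ p : Iio o, transfiniteIter f a b p := by
        rwa [← transfiniteIter_limit ho']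
      obtain ⟨p, hxp⟩ := exists_lt_of_lt_ciSup hxo
      exact absurd (hbelow p p.2) (not_le.2 hxp)
  · rintro ⟨β, ⟨⟨o, rfl⟩, hβb⟩, hβx, hxβ⟩
    have hβ := transfiniteIter_mem_Icc hab hf o
    exact ⟨hβ.1.trans hβx, hxβ.trans_le (hf _ ⟨hβ.1, hβ.2.lt_of_ne hβb⟩).2⟩

end TransfiniteIter

theorem right_regulated_step_decomposition_general {E : Type*} [NormedAddCommGroup E]
    (a b : ℝ) (hab : a < b) (g : ℝ → E)
    (hg : ∀ x ∈ Set.Ico a b, ∃ L : E,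
      Filter.Tendsto g (nhdsWithin x (Set.Ioi x)) (nhds L))
    (ε : ℝ) (hε : 0 < ε) :
    ∃ Λ : Set ℝ, Λ ⊆ Set.Icc a b ∧
      (∀ s : Set ℝ, s ⊆ Λ → s.Nonempty → ∃ m ∈ s, ∀ x ∈ s, m ≤ x) ∧
      a ∈ Λ ∧ b ∈ Λ ∧ (∀ x ∈ Λ, a ≤ x) ∧ (∀ x ∈ Λ, x ≤ b) ∧
      ∃ S : ℝ → ℝ,
        (∀ β ∈ Λ \ {b}, S β ∈ Λ ∧ β < S β ∧ ∀ x ∈ Λ, β < x → S β ≤ x) ∧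
        (Set.Ico a b = ⋃ β ∈ Λ \ {b}, Set.Ico β (S β)) ∧
        Set.PairwiseDisjoint (Λ \ {b}) (fun β => Set.Ico β (S β)) ∧
        ∀ β ∈ Λ \ {b}, ∀ s ∈ Set.Ioo β (S β), ∀ t ∈ Set.Ioo β (S β),
          ‖g s - g t‖ ≤ ε := by
  have hstep : ∀ x ∈ Ico a b, ∃ y ∈ Ioc x b,
      ∀ s ∈ Ioo x y, ∀ t ∈ Ioo x y, ‖g s - g t‖ ≤ ε := by
    intro x hx
    obtain ⟨L, hL⟩ := hg x hx
    obtain ⟨y, hy, hosc⟩ := exists_Ioc_forall_dist_lt_of_tendsto_nhdsGT hL hx.2 hε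
    exact ⟨y, hy, fun s hs t ht => (dist_eq_norm (g s) (g t) ▸ hosc s hs t ht).le⟩
  choose! S hS hSosc using hstep
  set Λ := range (transfiniteIter S a b)
  have hΛ : Λ ⊆ Icc a b := range_subset_iff.2 (transfiniteIter_mem_Icc hab.le hS)
  have hIco : ∀ β ∈ Λ \ {b}, β ∈ Ico a b :=
    fun β hβ => ⟨(hΛ hβ.1).1, (hΛ hβ.1).2.lt_of_ne hβ.2⟩
  have hleast : ∀ β ∈ Λ \ {b}, ∀ x ∈ Λ, β < x → S β ≤ x := fun β hβ _ hx =>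
    apply_le_of_mem_range_transfiniteIter hab.le hS hβ.1 (hIco β hβ).2 hx
  have hwf : Λ.IsWF := (transfiniteIter_monotone hab.le hS).isWF_range
  refine ⟨Λ, hΛ, fun s hs hne => ⟨_, (hwf.mono hs).min_mem hne, fun x => (hwf.mono hs).min_le hne⟩,
    ⟨0, transfiniteIter_zero⟩, exists_transfiniteIter_eq_right hab.le hS, fun x hx => (hΛ hx).1,
    fun x hx => (hΛ hx).2, S, fun β hβ => ?_, Ico_eq_biUnion_transfiniteIter hab.le hS,
    pairwiseDisjoint_Ico_of_le_of_lt fun β hβ γ hγ => hleast β hβ γ hγ.1,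
    fun β hβ => hSosc β (hIco β hβ)⟩
  exact ⟨apply_mem_range_transfiniteIter hβ.1 (hIco β hβ).2, (hS β (hIco β hβ)).1, hleast β hβ⟩

/-- For a right regulated mapping `g : [a,b] → E` and every `ε > 0` there is a
well-ordered subset `Λ` of `[a,b]` with `min Λ = a`, `max Λ = b`, such that
`[a,b)` is the disjoint union of the intervals `[β, S β)`, `β ∈ Λ \ {b}`, and the
oscillation of `g` on each open interval `(β, S β)` is at most `ε`. -/
theorem right_regulated_step_decomposition {E : Type*} [NormedAddCommGroup E]
    [NormedSpace ℝ E] [CompleteSpace E] (a b : ℝ) (hab : a < b) (g : ℝ → E)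
    (hg : ∀ x ∈ Set.Ico a b, ∃ L : E,
      Filter.Tendsto g (nhdsWithin x (Set.Ioi x)) (nhds L))
    (ε : ℝ) (hε : 0 < ε) :
    ∃ Λ : Set ℝ, Λ ⊆ Set.Icc a b ∧
      (∀ s : Set ℝ, s ⊆ Λ → s.Nonempty → ∃ m ∈ s, ∀ x ∈ s, m ≤ x) ∧
      a ∈ Λ ∧ b ∈ Λ ∧ (∀ x ∈ Λ, a ≤ x) ∧ (∀ x ∈ Λ, x ≤ b) ∧
      ∃ S : ℝ → ℝ,
        (∀ β ∈ Λ \ {b}, S β ∈ Λ ∧ β < S β ∧ ∀ x ∈ Λ, β < x → S β ≤ x) ∧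
        (Set.Ico a b = ⋃ β ∈ Λ \ {b}, Set.Ico β (S β)) ∧
        Set.PairwiseDisjoint (Λ \ {b}) (fun β => Set.Ico β (S β)) ∧
        ∀ β ∈ Λ \ {b}, ∀ s ∈ Set.Ioo β (S β), ∀ t ∈ Set.Ioo β (S β),
          ‖g s - g t‖ ≤ ε :=
  right_regulated_step_decomposition_general a b hab g hg ε hε
end

section
/- If g : [a,b] → E is a right regulated mapping from a compact real interval to a Banach space E, then the set of points of [a,b] at which g is discontinuous is countable. -/
open Set Filter

/-- A set of reals all of whose points are isolated on the right (within the set)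
is countable. -/
lemma countable_of_right_isolated (S : Set ℝ)
    (h : ∀ x ∈ S, ∃ δ > 0, Set.Ioo x (x + δ) ∩ S = ∅) : S.Countable := by
  -- choose a rational in each right gap
  have hq : ∀ x : S, ∃ q : ℚ, (x : ℝ) < q ∧ Set.Ioo (x : ℝ) (q : ℝ) ∩ S = ∅ := by
    rintro ⟨x, hx⟩
    obtain ⟨δ, hδ, hdisj⟩ := h x hx
    obtain ⟨q, hq1, hq2⟩ := exists_rat_btwn (show x < x + δ by linarith)
    refine ⟨q, hq1, ?_⟩
    apply Set.eq_empty_of_subset_empty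
    intro t ht
    rw [← hdisj]
    exact ⟨⟨ht.1.1, lt_trans ht.1.2 hq2⟩, ht.2⟩
  choose f hf1 hf2 using hq
  rw [← Set.countable_coe_iff]
  refine Countable.of_equiv _ (Equiv.ofInjective f ?_).symm
  have key : ∀ x y : S, (x : ℝ) < (y : ℝ) → f x ≠ f y := by
    intro x y hlt hxy
    have h1 : ¬ ((y : ℝ) ∈ Set.Ioo (x : ℝ) ((f x : ℚ) : ℝ) ∩ S) := by
      rw [hf2 x]; exact notMem_empty _
    have h2 : (y : ℝ) < ((f x : ℚ) : ℝ) := by rw [hxy]; exact hf1 y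
    exact h1 ⟨⟨hlt, h2⟩, y.2⟩
  intro x y hxy
  rcases lt_trichotomy (x : ℝ) (y : ℝ) with h | h | h
  · exact absurd hxy (key x y h)
  · exact Subtype.ext h
  · exact absurd hxy.symm (key y x h)

/-- A right regulated mapping `g : [a,b] → E` into a Banach space has at most
countably many points of discontinuity. -/
theorem right_regulated_countable_discontinuities {E : Type*}
    [NormedAddCommGroup E] [NormedSpace ℝ E] [CompleteSpace E]
    (a b : ℝ) (hab : a < b) (g : ℝ → E)
    (hg : ∀ x ∈ Set.Ico a b, ∃ L : E,
      Filter.Tendsto g (nhdsWithin x (Set.Ioi x)) (nhds L)) :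
    {x | x ∈ Set.Icc a b ∧ ¬ ContinuousWithinAt g (Set.Icc a b) x}.Countable := by
  -- D n : points of oscillation ≥ 1/(n+1)
  set D : ℕ → Set ℝ := fun n =>
    {x | x ∈ Set.Icc a b ∧ ∀ δ > 0, ∃ t ∈ Set.Icc a b,
      |t - x| < δ ∧ (1 : ℝ)/(n+1) ≤ ‖g t - g x‖} with hD
  have hsub : {x | x ∈ Set.Icc a b ∧ ¬ ContinuousWithinAt g (Set.Icc a b) x}
      ⊆ ⋃ n : ℕ, D n := by
    rintro x ⟨hx, hcont⟩
    rw [Metric.continuousWithinAt_iff] at hcont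
    push_neg at hcont
    obtain ⟨ε, hε, hx2⟩ := hcont
    obtain ⟨n, hn⟩ := exists_nat_one_div_lt hε
    refine Set.mem_iUnion.mpr ⟨n, hx, fun δ hδ => ?_⟩
    obtain ⟨t, ht, htδ, htε⟩ := hx2 δ hδ
    refine ⟨t, ht, htδ, le_trans (le_of_lt hn) ?_⟩
    rwa [dist_eq_norm] at htε
  refine Set.Countable.mono hsub (Set.countable_iUnion fun n => ?_)
  apply countable_of_right_isolated
  rintro x ⟨hx, hosc⟩
  rcases eq_or_lt_of_le hx.2 with hxb | hxb
  · -- x = b : everything to the right of b is outside Icc a b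
    refine ⟨1, one_pos, Set.eq_empty_of_subset_empty ?_⟩
    rintro t ⟨⟨ht1, _⟩, ⟨⟨_, htb⟩, _⟩⟩
    rw [← hxb] at htb
    exact absurd ht1 (not_lt.mpr htb)
  · -- x < b : use the right limit
    obtain ⟨L, hL⟩ := hg x ⟨hx.1, hxb⟩
    have hε : (0:ℝ) < 1/(4*(n+1)) := by positivity
    have := hL (Metric.ball_mem_nhds L hε)
    rw [mem_map, mem_nhdsWithin] at this
    obtain ⟨U, hUopen, hxU, hUsub⟩ := this
    obtain ⟨δ, hδ, hball⟩ := Metric.isOpen_iff.mp hUopen x hxU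
    have hnear : ∀ t ∈ Set.Ioo x (x + δ), ‖g t - L‖ < 1/(4*(n+1)) := by
      intro t ht
      have : t ∈ U ∩ Set.Ioi x := by
        refine ⟨hball ?_, ht.1⟩
        rw [Metric.mem_ball, Real.dist_eq, abs_of_pos (by linarith [ht.1])]
        linarith [ht.2]
      have := hUsub this
      rwa [mem_preimage, Metric.mem_ball, dist_eq_norm] at this
    refine ⟨δ, hδ, Set.eq_empty_of_subset_empty ?_⟩
    rintro y ⟨hy, hyIcc, hyosc⟩
    -- y ∈ (x, x+δ) ∩ D n; derive contradiction
    exfalso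
    set r := min (y - x) (x + δ - y) with hr
    have hr0 : 0 < r := lt_min (by linarith [hy.1]) (by linarith [hy.2])
    obtain ⟨t, htIcc, htr, htn⟩ := hyosc r hr0
    have htI : t ∈ Set.Ioo x (x + δ) := by
      rw [abs_lt] at htr
      constructor
      · have := min_le_left (y - x) (x + δ - y); linarith [htr.1]
      · have := min_le_right (y - x) (x + δ - y); linarith [htr.2]
    have h1 := hnear t htI
    have h2 := hnear y hy
    have : ‖g t - g y‖ < 1/(2*(n+1)) := by
      calc ‖g t - g y‖ = ‖(g t - L) - (g y - L)‖ := by rw [sub_sub_sub_cancel_right]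
        _ ≤ ‖g t - L‖ + ‖g y - L‖ := norm_sub_le _ _
        _ < 1/(4*(n+1)) + 1/(4*(n+1)) := by linarith
        _ = 1/(2*(n+1)) := by field_simp; ring
    have hlt : (1:ℝ)/(2*(n+1)) < 1/(n+1) := by
      apply div_lt_div_of_pos_left one_pos (by positivity)
      nlinarith [Nat.cast_nonneg (α := ℝ) n]
    linarith
end

section
/- A right regulated mapping g : [a,b] → E from a compact real interval to a Banach space is Riemann integrable if and only if it is bounded. -/
/-!
Necessity: if the Riemann sums of fine partitions are within `1` of `I`, then moving a single
tag `t i ↦ z` inside its cell changes the sum by `(t (i+1) - t i) • (g z - g (t i))`, of norm less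
than `2`; so on every cell of one fixed fine partition `g` is bounded.

Sufficiency: at each point of `[a, b)` the right limit makes `g` nearly constant on some
`(x, y)`, so the points where the oscillation of `g` is at least `ε` are isolated from the right,
hence countable, and `g` is continuous off a countable set. This is Lebesgue's criterion: cover
the discontinuities by an open set `U` of measure `< η`; on the compact set `[a, b] \ U` the
oscillation is uniformly `≤ η`, so every fine cell either has oscillation `≤ η` or lies in `U`,
and the Riemann sums differ from the Bochner integral by at most `η (b - a) + 2 M η`.
-/

open Set Filter Topology MeasureTheory Metric

/-- Riemann integrability of a Banach-valued map on `[a,b]`, via Riemann sums of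
tagged partitions with uniform mesh. -/
def RiemannIntegrableOn {E : Type*} [NormedAddCommGroup E] [NormedSpace ℝ E]
    (g : ℝ → E) (a b : ℝ) : Prop :=
  ∃ I : E, ∀ ε > (0 : ℝ), ∃ δ > (0 : ℝ), ∀ m : ℕ, ∀ t ξ : ℕ → ℝ,
    t 0 = a → t m = b → (∀ i < m, t i < t (i + 1)) →
    (∀ i < m, ξ i ∈ Set.Icc (t i) (t (i + 1))) →
    (∀ i < m, t (i + 1) - t i < δ) →
    ‖(∑ i ∈ Finset.range m, (t (i + 1) - t i) • g (ξ i)) - I‖ < ε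

lemma countable_of_forall_exists_Ioo_notMem {α : Type*} [LinearOrder α] [TopologicalSpace α]
    [OrderTopology α] [SecondCountableTopology α] {S : Set α}
    (h : ∀ x ∈ S, ∃ y, x < y ∧ ∀ z ∈ S, z ∉ Ioo x y) : S.Countable := by
  choose! y hxy hgap using h
  have hdisj : ∀ x ∈ S, ∀ x' ∈ S, x < x' → Disjoint (Ioo x (y x)) (Ioo x' (y x')) :=
    fun x hx x' hx' hlt => disjoint_left.2 fun u hu hu' =>
      hgap x hx x' hx' ⟨hlt, hu'.1.trans hu.2⟩
  refine PairwiseDisjoint.countable_of_Ioo (fun x hx x' hx' hne => ?_) hxy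
  rcases hne.lt_or_gt with hlt | hlt
  · exact hdisj x hx x' hx' hlt
  · exact (hdisj x' hx' x hx hlt).symm

section Oscillation

variable {F : Type*} [PseudoEMetricSpace F] {g : ℝ → F} {S D : Set ℝ}

lemma countable_setOf_le_oscillationWithin
    (hg : ∀ x ∈ S, ∃ L, Tendsto g (𝓝[>] x) (𝓝 L)) {ε : ENNReal} (hε : 0 < ε) :
    {x ∈ S | ε ≤ oscillationWithin g D x}.Countable := by
  refine countable_of_forall_exists_Ioo_notMem fun x ⟨hxS, _⟩ => ?_
  obtain ⟨L, hL⟩ := hg x hxS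
  obtain ⟨ε₀, hε₀, hε₀ε⟩ := exists_between hε
  -- near `x` on the right, `g` takes values in a set of diameter `ε₀ < ε`
  obtain ⟨T, hT, hTdiam⟩ := (EMetric.cauchy_iff.1 hL.cauchy_map).2 ε₀ hε₀
  obtain ⟨y, hxy, hsub⟩ := mem_nhdsGT_iff_exists_Ioo_subset.1 hT
  refine ⟨y, hxy, fun z ⟨_, hz⟩ hzxy => hz.not_gt ?_⟩
  have hTz : T ∈ (𝓝[D] z).map g :=
    mem_nhdsWithin_of_mem_nhds (mem_of_superset (isOpen_Ioo.mem_nhds hzxy) hsub)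
  calc oscillationWithin g D z ≤ ediam T := iInf₂_le T hTz
    _ ≤ ε₀ := ediam_le fun u hu v hv => (hTdiam u hu v hv).le
    _ < ε := hε₀ε

lemma countable_setOf_oscillationWithin_ne_zero
    (hg : ∀ x ∈ S, ∃ L, Tendsto g (𝓝[>] x) (𝓝 L)) :
    {x ∈ S | oscillationWithin g D x ≠ 0}.Countable := by
  refine (countable_iUnion fun n : ℕ =>
    countable_setOf_le_oscillationWithin (D := D) hg (ε := (n : ENNReal)⁻¹) (by simp)).mono ?_
  rintro x ⟨hxS, hx⟩
  obtain ⟨n, hn⟩ := ENNReal.exists_inv_nat_lt hx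
  exact mem_iUnion.2 ⟨n, hxS, hn.le⟩

lemma countable_setOf_not_continuousWithinAt_Icc {a b : ℝ}
    (hg : ∀ x ∈ Ico a b, ∃ L, Tendsto g (𝓝[>] x) (𝓝 L)) :
    {x ∈ Icc a b | ¬ContinuousWithinAt g (Icc a b) x}.Countable := by
  refine ((countable_setOf_oscillationWithin_ne_zero (D := Icc a b) hg).insert b).mono ?_
  rintro x ⟨hx, hxc⟩
  rcases hx.2.eq_or_lt with rfl | hxb
  · exact mem_insert _ _
  · exact mem_insert_of_mem _ ⟨⟨hx.1, hxb⟩,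
      mt (OscillationWithin.eq_zero_iff_continuousWithinAt g hx).1 hxc⟩

end Oscillation

lemma norm_sub_le_add_indicator {X F : Type*} [PseudoMetricSpace X] [NormedAddCommGroup F]
    {g : X → F} {D U J : Set X} {δ η M : ℝ} (hη : 0 ≤ η) (hM : ∀ x ∈ D, ‖g x‖ ≤ M)
    (hosc : ∀ y ∈ D \ U, ediam (g '' (eball y (ENNReal.ofReal δ) ∩ D)) ≤ ENNReal.ofReal η)
    (hJD : J ⊆ D) (hJ : ∀ u ∈ J, ∀ v ∈ J, dist u v < δ) {u v : X} (hu : u ∈ J) (hv : v ∈ J) :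
    ‖g u - g v‖ ≤ η + U.indicator (fun _ => 2 * M) v := by
  have hM0 : 0 ≤ 2 * M := by linarith [(norm_nonneg _).trans (hM u (hJD hu))]
  by_cases hK : ∃ y ∈ J, y ∈ D \ U
  · obtain ⟨y, hyJ, hyK⟩ := hK
    have hball : ∀ w ∈ J, g w ∈ g '' (eball y (ENNReal.ofReal δ) ∩ D) := fun w hw =>
      mem_image_of_mem g ⟨edist_lt_ofReal.2 (hJ w hw y hyJ), hJD hw⟩
    have : ‖g u - g v‖ ≤ η := by
      rw [← dist_eq_norm, ← edist_le_ofReal hη]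
      exact (edist_le_ediam_of_mem (hball u hu) (hball v hv)).trans (hosc y hyK)
    linarith [indicator_nonneg (fun _ _ => hM0) v (s := U)]
  · have hvU : v ∈ U := by_contra fun h => hK ⟨v, hv, hJD hv, h⟩
    rw [indicator_of_mem hvU]
    linarith [norm_sub_le (g u) (g v), hM u (hJD hu), hM v (hJD hv)]

lemma integrableOn_Icc_of_norm_le_of_continuousWithinAt {F : Type*} [NormedAddCommGroup F]
    {g : ℝ → F} {a b M : ℝ} {N : Set ℝ}
    (hM : ∀ x ∈ Icc a b, ‖g x‖ ≤ M) (hN : volume N = 0)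
    (hc : ∀ x ∈ Icc a b \ N, ContinuousWithinAt g (Icc a b) x) :
    IntegrableOn g (Icc a b) := by
  obtain ⟨N', hNN', hN'meas, hN'⟩ := exists_measurable_superset_of_null hN
  have hcont : ContinuousOn g (Icc a b \ N') := fun x hx =>
    (hc x ⟨hx.1, fun h => hx.2 (hNN' h)⟩).mono sdiff_subset
  have hmeas : AEStronglyMeasurable g (volume.restrict (Icc a b)) := by
    rw [← Measure.restrict_congr_set (sdiff_null_ae_eq_self hN')]
    exact hcont.aestronglyMeasurable (measurableSet_Icc.diff hN'meas)
  exact .of_bound measure_Icc_lt_top hmeas M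
    ((ae_restrict_iff' measurableSet_Icc).2 (ae_of_all _ hM))

section Riemann

variable {E : Type*} [NormedAddCommGroup E] [NormedSpace ℝ E]

def riemannSum (g : ℝ → E) (m : ℕ) (t ξ : ℕ → ℝ) : E :=
  ∑ i ∈ Finset.range m, (t (i + 1) - t i) • g (ξ i)

-- `RiemannIntegrableOn g a b` unfolds to `∃ I, HasRiemannIntegralOn g a b I`.
def HasRiemannIntegralOn (g : ℝ → E) (a b : ℝ) (I : E) : Prop :=
  ∀ ε > (0 : ℝ), ∃ δ > (0 : ℝ), ∀ m : ℕ, ∀ t ξ : ℕ → ℝ,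
    t 0 = a → t m = b → (∀ i < m, t i < t (i + 1)) →
    (∀ i < m, ξ i ∈ Icc (t i) (t (i + 1))) →
    (∀ i < m, t (i + 1) - t i < δ) →
    ‖riemannSum g m t ξ - I‖ < ε

section Partition

variable {m : ℕ} {t : ℕ → ℝ}

lemma Icc_succ_subset_Icc_zero (ht : ∀ i < m, t i < t (i + 1)) {i : ℕ} (hi : i < m) :
    Icc (t i) (t (i + 1)) ⊆ Icc (t 0) (t m) := by
  have hmono := (strictMonoOn_Iic_of_lt_succ (ψ := t) (n := m) fun j hj => ht j hj).monotoneOn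
  exact Icc_subset_Icc (hmono (by simp) (by simp; omega) (Nat.zero_le i))
    (hmono (by simp; omega) (by simp) hi)

lemma exists_mem_Icc_succ {x : ℝ} (hm : 0 < m) (hx : x ∈ Icc (t 0) (t m)) :
    ∃ i < m, x ∈ Icc (t i) (t (i + 1)) := by
  induction m with
  | zero => exact absurd hm (lt_irrefl 0)
  | succ k ih =>
    rcases Nat.eq_zero_or_pos k with rfl | hk
    · exact ⟨0, Nat.zero_lt_one, hx⟩
    rcases le_or_gt x (t k) with hxk | hxk
    · obtain ⟨i, hi, hxi⟩ := ih hk ⟨hx.1, hxk⟩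
      exact ⟨i, hi.trans (Nat.lt_succ_self k), hxi⟩
    · exact ⟨k, Nat.lt_succ_self k, hxk.le, hx.2⟩

lemma exists_partition_mesh_lt {a b δ : ℝ} (hab : a < b) (hδ : 0 < δ) :
    ∃ m : ℕ, ∃ t : ℕ → ℝ,
      0 < m ∧ StrictMono t ∧ t 0 = a ∧ t m = b ∧ ∀ i, t (i + 1) - t i < δ := by
  obtain ⟨n, hn⟩ := exists_nat_gt ((b - a) / δ)
  have hn0 : (0 : ℝ) < n := (div_pos (sub_pos.2 hab) hδ).trans hn
  have hstep : ∀ i : ℕ,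
      (a + (i + 1 : ℕ) * ((b - a) / n)) - (a + i * ((b - a) / n)) = (b - a) / n :=
    fun i => by push_cast; ring
  refine ⟨n, fun i => a + i * ((b - a) / n), by exact_mod_cast hn0,
    strictMono_nat_of_lt_succ fun i => ?_, by simp, by field_simp; ring, fun i => ?_⟩
  · linarith [hstep i, div_pos (sub_pos.2 hab) hn0]
  · rw [hstep, div_lt_iff₀ hn0]
    rwa [div_lt_iff₀ hδ, mul_comm] at hn

end Partition

lemma riemannSum_update_sub (g : ℝ → E) {m i : ℕ} (hi : i < m) (t ξ : ℕ → ℝ) (z : ℝ) :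
    riemannSum g m t (Function.update ξ i z) - riemannSum g m t ξ =
      (t (i + 1) - t i) • (g z - g (ξ i)) := by
  rw [riemannSum, riemannSum, ← Finset.sum_sub_distrib, Finset.sum_eq_single_of_mem i
    (Finset.mem_range.2 hi) fun j _ hj => by simp [Function.update_of_ne hj]]
  simp [smul_sub]

theorem HasRiemannIntegralOn.exists_norm_le {g : ℝ → E} {a b : ℝ} {I : E} (hab : a < b)
    (h : HasRiemannIntegralOn g a b I) : ∃ M, ∀ x ∈ Icc a b, ‖g x‖ ≤ M := by
  obtain ⟨δ, hδ, hsum⟩ := h 1 one_pos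
  obtain ⟨m, t, hm, ht, ht0, htm, hmesh⟩ := exists_partition_mesh_lt hab hδ
  have hlen : ∀ i, 0 < t (i + 1) - t i := fun i => sub_pos.2 (ht (Nat.lt_succ_self i))
  have hsum' : ∀ ξ : ℕ → ℝ, (∀ i < m, ξ i ∈ Icc (t i) (t (i + 1))) →
      ‖riemannSum g m t ξ - I‖ < 1 :=
    fun ξ hξ => hsum m t ξ ht0 htm (fun i _ => ht (Nat.lt_succ_self i)) hξ fun i _ => hmesh i
  have hleft : ∀ i < m, t i ∈ Icc (t i) (t (i + 1)) :=
    fun i _ => ⟨le_rfl, (ht (Nat.lt_succ_self i)).le⟩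
  -- two Riemann sums that differ in a single tag are both within `1` of `I`
  have hcell : ∀ i < m, ∀ z ∈ Icc (t i) (t (i + 1)),
      (t (i + 1) - t i) * ‖g z - g (t i)‖ < 2 := by
    intro i hi z hz
    have hupd : ∀ j < m, Function.update t i z j ∈ Icc (t j) (t (j + 1)) := by
      intro j hj
      rcases eq_or_ne j i with rfl | hne
      · simpa using hz
      · simpa [Function.update_of_ne hne] using hleft j hj
    calc (t (i + 1) - t i) * ‖g z - g (t i)‖
        = dist (riemannSum g m t (Function.update t i z)) (riemannSum g m t t) := by
          rw [dist_eq_norm, riemannSum_update_sub g hi, norm_smul, Real.norm_of_nonneg (hlen i).le]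
      _ ≤ dist (riemannSum g m t (Function.update t i z)) I + dist (riemannSum g m t t) I :=
          dist_triangle_right _ _ _
      _ < 1 + 1 := by
          rw [dist_eq_norm, dist_eq_norm]
          exact add_lt_add (hsum' _ hupd) (hsum' t hleft)
      _ = 2 := by norm_num
  refine ⟨∑ i ∈ Finset.range m, (‖g (t i)‖ + 2 / (t (i + 1) - t i)), fun x hx => ?_⟩
  obtain ⟨i, hi, hxi⟩ := exists_mem_Icc_succ hm (ht0 ▸ htm ▸ hx)
  calc ‖g x‖ ≤ ‖g (t i)‖ + ‖g x - g (t i)‖ := norm_le_insert' _ _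
    _ ≤ ‖g (t i)‖ + 2 / (t (i + 1) - t i) := by
        gcongr
        rw [le_div_iff₀ (hlen i), mul_comm]
        exact (hcell i hi x hxi).le
    _ ≤ _ := Finset.single_le_sum (f := fun i => ‖g (t i)‖ + 2 / (t (i + 1) - t i))
        (fun j _ => add_nonneg (norm_nonneg _) (div_nonneg zero_le_two (hlen j).le))
        (Finset.mem_range.2 hi)

lemma norm_riemannSum_sub_integral_le [CompleteSpace E] {g : ℝ → E} {φ : ℝ → ℝ} {m : ℕ}
    {t ξ : ℕ → ℝ} (ht : ∀ i < m, t i < t (i + 1))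
    (hg : IntervalIntegrable g volume (t 0) (t m)) (hφ : IntervalIntegrable φ volume (t 0) (t m))
    (hle : ∀ i < m, ∀ x ∈ Ioc (t i) (t (i + 1)), ‖g (ξ i) - g x‖ ≤ φ x) :
    ‖riemannSum g m t ξ - ∫ x in t 0..t m, g x‖ ≤ ∫ x in t 0..t m, φ x := by
  have hsub : ∀ i < m, uIcc (t i) (t (i + 1)) ⊆ uIcc (t 0) (t m) := fun i hi => by
    rw [uIcc_of_le (ht i hi).le]
    exact (Icc_succ_subset_Icc_zero ht hi).trans Icc_subset_uIcc
  have hgi : ∀ i < m, IntervalIntegrable g volume (t i) (t (i + 1)) :=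
    fun i hi => hg.mono_set (hsub i hi)
  have hφi : ∀ i < m, IntervalIntegrable φ volume (t i) (t (i + 1)) :=
    fun i hi => hφ.mono_set (hsub i hi)
  rw [← intervalIntegral.sum_integral_adjacent_intervals hgi,
    ← intervalIntegral.sum_integral_adjacent_intervals hφi, riemannSum, ← Finset.sum_sub_distrib]
  refine (norm_sum_le _ _).trans (Finset.sum_le_sum fun i hi => ?_)
  have hi : i < m := Finset.mem_range.1 hi
  rw [← intervalIntegral.integral_const,
    ← intervalIntegral.integral_sub intervalIntegrable_const (hgi i hi)]
  exact intervalIntegral.norm_integral_le_of_norm_le (ht i hi).le (ae_of_all _ (hle i hi))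
    (hφi i hi)

theorem hasRiemannIntegralOn_integral_of_continuousWithinAt [CompleteSpace E] {g : ℝ → E}
    {a b M : ℝ} {N : Set ℝ} (hab : a ≤ b) (hM : ∀ x ∈ Icc a b, ‖g x‖ ≤ M) (hN : volume N = 0)
    (hc : ∀ x ∈ Icc a b \ N, ContinuousWithinAt g (Icc a b) x) :
    HasRiemannIntegralOn g a b (∫ x in a..b, g x) := by
  intro ε hε
  have hM0 : 0 ≤ M := (norm_nonneg _).trans (hM a (left_mem_Icc.2 hab))
  obtain ⟨η, hη, hηε⟩ := exists_pos_mul_lt hε (b - a + 2 * M)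
  obtain ⟨U, hNU, hUo, hUη⟩ := Set.exists_isOpen_lt_of_lt (μ := volume) N (ENNReal.ofReal η)
    (by rw [hN]; exact ENNReal.ofReal_pos.2 hη)
  obtain ⟨δ, hδ, hosc⟩ := (isCompact_Icc.diff hUo).uniform_oscillationWithin (f := g)
    (D := Icc a b) (ε := ENNReal.ofReal η) fun x hx => by
      rw [(OscillationWithin.eq_zero_iff_continuousWithinAt g hx.1).2
        (hc x ⟨hx.1, fun h => hx.2 (hNU h)⟩)]
      exact ENNReal.ofReal_pos.2 hη
  refine ⟨δ, hδ, fun m t ξ ht0 htm ht hξ hmesh => ?_⟩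
  set φ : ℝ → ℝ := fun x => η + U.indicator (fun _ => 2 * M) x
  have hind : IntervalIntegrable (U.indicator fun _ => 2 * M) volume a b :=
    intervalIntegrable_iff.2 <|
      (intervalIntegrable_iff.1 intervalIntegrable_const).indicator hUo.measurableSet
  have hUreal : (volume.restrict (Ioc a b)).real U ≤ η :=
    (ENNReal.toReal_lt_of_lt_ofReal ((Measure.restrict_apply_le _ _).trans_lt hUη)).le
  have hφint : ∫ x in a..b, φ x ≤ (b - a + 2 * M) * η := by
    rw [intervalIntegral.integral_add intervalIntegrable_const hind,
      intervalIntegral.integral_const, intervalIntegral.integral_of_le hab,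
      integral_indicator_const _ hUo.measurableSet, smul_eq_mul, smul_eq_mul]
    linarith [mul_le_mul_of_nonneg_right hUreal (by linarith : (0 : ℝ) ≤ 2 * M)]
  have hle : ∀ i < m, ∀ x ∈ Ioc (t i) (t (i + 1)), ‖g (ξ i) - g x‖ ≤ φ x := by
    intro i hi x hx
    have hcell := ht0 ▸ htm ▸ Icc_succ_subset_Icc_zero ht hi
    exact norm_sub_le_add_indicator hη.le hM hosc hcell
      (fun u hu v hv => (Real.dist_le_of_mem_Icc hu hv).trans_lt (hmesh i hi)) (hξ i hi)
      (Ioc_subset_Icc_self hx)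
  have hgi : IntervalIntegrable g volume a b :=
    (intervalIntegrable_iff_integrableOn_Icc_of_le hab).2
      (integrableOn_Icc_of_norm_le_of_continuousWithinAt hM hN hc)
  calc ‖riemannSum g m t ξ - ∫ x in a..b, g x‖ ≤ ∫ x in a..b, φ x := by
        subst ht0 htm
        exact norm_riemannSum_sub_integral_le ht hgi (intervalIntegrable_const.add hind) hle
    _ ≤ (b - a + 2 * M) * η := hφint
    _ < ε := hηε

end Riemann

/-- A right regulated mapping `g : [a,b] → E` is Riemann integrable if and only
if it is bounded. -/
theorem right_regulated_riemannIntegrable_iff_bounded {E : Type*}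
    [NormedAddCommGroup E] [NormedSpace ℝ E] [CompleteSpace E]
    (a b : ℝ) (hab : a < b) (g : ℝ → E)
    (hg : ∀ x ∈ Set.Ico a b, ∃ L : E,
      Filter.Tendsto g (nhdsWithin x (Set.Ioi x)) (nhds L)) :
    RiemannIntegrableOn g a b ↔ ∃ M : ℝ, ∀ t ∈ Set.Icc a b, ‖g t‖ ≤ M := by
  constructor
  · rintro ⟨I, hI⟩
    exact HasRiemannIntegralOn.exists_norm_le hab hI
  · rintro ⟨M, hM⟩
    exact ⟨_, hasRiemannIntegralOn_integral_of_continuousWithinAt hab.le hM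
      ((countable_setOf_not_continuousWithinAt_Icc hg).measure_zero volume)
      fun x hx => not_not.1 fun h => hx.2 ⟨hx.1, h⟩⟩
end

section
/- Let g : [a,b] → E be right regulated with values in a Banach space, let ε > 0, and let Λ be a well-ordered subset of [a,b] with min Λ = a, max Λ = b, such that [a,b) is the disjoint union of [β, S(β)), β ∈ Λ \ {b}, and ‖g(s) − g(t)‖ ≤ ε for all s,t ∈ (β, S(β)). Define g_ε : [a,b] → E by g_ε(t) = lim_{s→β⁺} g(s) for t ∈ [β, S(β)), and g_ε(b) = g(b). Then ‖g_ε(t) − g(t)‖ ≤ ε for every t ∈ [a,b) that is not an element of Λ, and consequently g_ε − g is bounded on [a,b] outside the countable set Λ, hence Bochner integrable on [a,b]. -/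
open MeasureTheory Filter Set Topology

/-! Off Λ, the bound `‖gε t - g t‖ ≤ ε` is the oscillation bound on `(β, S β)` in the limit
`s → β⁺`. Since the intervals `[β, S β)` are disjoint with nonempty interior, Λ is countable, so
the bound holds almost everywhere and integrability reduces to a.e. strong measurability of the
right regulated maps `g` and `gε`. A right regulated map agrees with its right limits off a
countable set (the points where the jump exceeds `c` are isolated from the right), and these right
limits are the pointwise limits of the samples of `g` at the next dyadic point of level `n`,
which are measurable because they factor through `ℤ`. -/

section

variable {E : Type*} [NormedAddCommGroup E]

section RightLimits

variable {α : Type*} [LinearOrder α] [TopologicalSpace α] [OrderTopology α]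

lemma tendsto_nhdsGT_of_eqOn_Ico {f : α → E} {β γ t : α} {c : E}
    (hf : EqOn f (fun _ => c) (Ico β γ)) (ht : t ∈ Ico β γ) : Tendsto f (𝓝[>] t) (𝓝 c) :=
  tendsto_const_nhds.congr' (eventually_of_mem (Ioo_mem_nhdsGT ht.2)
    fun _ hs => (hf ⟨ht.1.trans hs.1.le, hs.2⟩).symm)

variable [DenselyOrdered α]

lemma norm_sub_le_of_tendsto_nhdsGT {g : α → E} {β γ : α} {ε : ℝ} {l y : E} (hβγ : β < γ)
    (hl : Tendsto g (𝓝[>] β) (𝓝 l)) (hg : ∀ s ∈ Ioo β γ, ‖g s - y‖ ≤ ε) : ‖l - y‖ ≤ ε :=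
  have : (𝓝[>] β).NeBot := nhdsGT_neBot_of_exists_gt ⟨γ, hβγ⟩
  le_of_tendsto (hl.sub_const y).norm (eventually_of_mem (Ioo_mem_nhdsGT hβγ) hg)

variable [NoMaxOrder α] [SecondCountableTopology α]

lemma countable_setOf_lt_norm_sub_of_tendsto_nhdsGT {g R : α → E} {s : Set α}
    (hR : ∀ t ∈ s, Tendsto g (𝓝[>] t) (𝓝 (R t))) {c : ℝ} (hc : 0 < c) :
    {t ∈ s | c < ‖g t - R t‖}.Countable := by
  set D := {t ∈ s | c < ‖g t - R t‖}
  refine (countable_setOfPred_isolated_right_within (s := D)).mono fun t ht => ?_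
  refine ⟨ht, ?_⟩
  have hnear : ∀ᶠ r in 𝓝[>] t, ‖g r - R t‖ < c / 2 :=
    ((hR t ht.1).sub_const (R t)).norm.eventually_lt_const (by simpa using half_pos hc)
  obtain ⟨u, htu, hsub⟩ := mem_nhdsGT_iff_exists_Ioo_subset.1 hnear
  -- Right of `t` both `g` and its right limits stay within `c / 2` of `R t`.
  have hgap : ∀ t' ∈ Ioo t u, t' ∉ D := by
    rintro t' ht' ⟨ht's, hlt⟩
    have hRt' : ‖R t' - R t‖ ≤ c / 2 :=
      norm_sub_le_of_tendsto_nhdsGT ht'.2 (hR t' ht's)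
        fun r hr => (hsub ⟨ht'.1.trans hr.1, hr.2⟩).le
    have htri := norm_sub_le_norm_sub_add_norm_sub (g t') (R t) (R t')
    rw [norm_sub_rev (R t)] at htri
    have hgt' : ‖g t' - R t‖ < c / 2 := hsub ht'
    linarith
  rw [← empty_mem_iff_bot]
  filter_upwards [nhdsWithin_mono t inter_subset_right (Ioo_mem_nhdsGT htu),
    self_mem_nhdsWithin] with r hr hrD using hgap r hr hrD.1

lemma countable_setOf_ne_of_tendsto_nhdsGT {g R : α → E} {s : Set α}
    (hR : ∀ t ∈ s, Tendsto g (𝓝[>] t) (𝓝 (R t))) : {t ∈ s | g t ≠ R t}.Countable := by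
  refine (countable_iUnion fun n : ℕ =>
    countable_setOf_lt_norm_sub_of_tendsto_nhdsGT hR (c := 1 / (n + 1)) (by positivity)).mono ?_
  rintro t ⟨hts, hne⟩
  obtain ⟨n, hn⟩ := exists_nat_one_div_lt (norm_pos_iff.2 (sub_ne_zero.2 hne))
  exact mem_iUnion.2 ⟨n, hts, hn⟩

end RightLimits

noncomputable def nextDyadic (n : ℕ) (t : ℝ) : ℝ := (⌊t * 2 ^ n⌋ + 1) / 2 ^ n

lemma lt_nextDyadic (n : ℕ) (t : ℝ) : t < nextDyadic n t := by
  rw [nextDyadic, lt_div_iff₀ (by positivity)]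
  exact Int.lt_floor_add_one _

lemma nextDyadic_le (n : ℕ) (t : ℝ) : nextDyadic n t ≤ t + (2 ^ n)⁻¹ := by
  have h2 : (0 : ℝ) < 2 ^ n := by positivity
  rw [nextDyadic, div_le_iff₀ h2, add_mul, inv_mul_cancel₀ h2.ne']
  linarith [Int.floor_le (t * 2 ^ n)]

lemma tendsto_nextDyadic_nhdsGT (t : ℝ) :
    Tendsto (nextDyadic · t) atTop (𝓝[>] t) := by
  refine tendsto_nhdsWithin_iff.2 ⟨?_, Eventually.of_forall fun n => lt_nextDyadic n t⟩
  have hupper : Tendsto (fun n : ℕ => t + (2 ^ n : ℝ)⁻¹) atTop (𝓝 t) := by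
    simpa using tendsto_const_nhds.add
      (tendsto_inv_atTop_zero.comp (tendsto_pow_atTop_atTop_of_one_lt (α := ℝ) one_lt_two))
  exact tendsto_of_tendsto_of_tendsto_of_le_of_le tendsto_const_nhds hupper
    (fun n => (lt_nextDyadic n t).le) (fun n => nextDyadic_le n t)

lemma stronglyMeasurable_comp_nextDyadic (g : ℝ → E) (n : ℕ) :
    StronglyMeasurable (g ∘ nextDyadic n) :=
  (StronglyMeasurable.of_discrete (f := fun k : ℤ => g ((k + 1) / 2 ^ n))).comp_measurable
    (Int.measurable_floor.comp (measurable_id.mul_const _))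

lemma aestronglyMeasurable_of_forall_exists_tendsto_nhdsGT {g : ℝ → E} {s : Set ℝ}
    (μ : Measure ℝ) [NullSingletonClass μ] (hs : MeasurableSet s)
    (hg : ∀ t ∈ s, ∃ l, Tendsto g (𝓝[>] t) (𝓝 l)) : AEStronglyMeasurable g (μ.restrict s) := by
  choose! R hR using hg
  refine aestronglyMeasurable_of_tendsto_ae atTop
    (fun n => (stronglyMeasurable_comp_nextDyadic g n).aestronglyMeasurable) ?_
  filter_upwards [ae_restrict_mem hs,
    ae_restrict_of_ae ((countable_setOf_ne_of_tendsto_nhdsGT hR).ae_notMem μ)] with t hts htD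
  rw [show g t = R t from not_not.1 fun hne => htD ⟨hts, hne⟩]
  exact (hR t hts).comp (tendsto_nextDyadic_nhdsGT t)

end

theorem step_approximation_bochner_general {E : Type*}
    [NormedAddCommGroup E]
    (a b : ℝ) (g : ℝ → E)
    (hg : ∀ x ∈ Set.Ico a b, ∃ L : E,
      Filter.Tendsto g (nhdsWithin x (Set.Ioi x)) (nhds L))
    (ε : ℝ)
    (Λ : Set ℝ)
    (S : ℝ → ℝ)
    (hS : ∀ β ∈ Λ \ {b}, S β ∈ Λ ∧ β < S β ∧ ∀ x ∈ Λ, β < x → S β ≤ x)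
    (hunion : Set.Ico a b = ⋃ β ∈ Λ \ {b}, Set.Ico β (S β))
    (hdisj : Set.PairwiseDisjoint (Λ \ {b}) (fun β => Set.Ico β (S β)))
    (hosc : ∀ β ∈ Λ \ {b}, ∀ s ∈ Set.Ioo β (S β), ∀ t ∈ Set.Ioo β (S β),
      ‖g s - g t‖ ≤ ε)
    (L : ℝ → E)
    (hL : ∀ β ∈ Λ \ {b},
      Filter.Tendsto g (nhdsWithin β (Set.Ioi β)) (nhds (L β)))
    (gε : ℝ → E)
    (hgε : ∀ β ∈ Λ \ {b}, ∀ t ∈ Set.Ico β (S β), gε t = L β) :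
    (∀ t ∈ Set.Ico a b, t ∉ Λ → ‖gε t - g t‖ ≤ ε) ∧
      IntegrableOn (fun t => gε t - g t) (Set.Icc a b) := by
  have hloc : ∀ t ∈ Ico a b, ∃ β ∈ Λ \ {b}, t ∈ Ico β (S β) := by
    intro t ht
    simpa only [hunion, mem_iUnion₂, exists_prop] using ht
  have hbound : ∀ t ∈ Ico a b, t ∉ Λ → ‖gε t - g t‖ ≤ ε := by
    intro t ht htΛ
    obtain ⟨β, hβ, htβ⟩ := hloc t ht
    have htβ' : t ∈ Ioo β (S β) := ⟨htβ.1.lt_of_ne fun h => htΛ (h ▸ hβ.1), htβ.2⟩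
    rw [hgε β hβ t htβ]
    exact norm_sub_le_of_tendsto_nhdsGT (htβ'.1.trans htβ'.2) (hL β hβ)
      fun s hs => hosc β hβ s hs t htβ'
  have hgε_reg : ∀ t ∈ Ico a b, ∃ l, Tendsto gε (𝓝[>] t) (𝓝 l) := fun t ht =>
    let ⟨β, hβ, htβ⟩ := hloc t ht
    ⟨L β, tendsto_nhdsGT_of_eqOn_Ico (hgε β hβ) htβ⟩
  have hΛ_countable : (Λ \ {b}).Countable :=
    (hdisj.mono fun _ => Ioo_subset_Ico_self).countable_of_Ioo fun β hβ => (hS β hβ).2.1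
  refine ⟨hbound, ?_⟩
  rw [integrableOn_Icc_iff_integrableOn_Ico]
  refine Integrable.mono' (integrableOn_const (C := ε) measure_Ico_lt_top.ne)
    ((aestronglyMeasurable_of_forall_exists_tendsto_nhdsGT volume measurableSet_Ico hgε_reg).sub
      (aestronglyMeasurable_of_forall_exists_tendsto_nhdsGT volume measurableSet_Ico hg)) ?_
  filter_upwards [ae_restrict_mem measurableSet_Ico,
    ae_restrict_of_ae (hΛ_countable.ae_notMem volume)] with t ht htΛ
  exact hbound t ht fun h => htΛ ⟨h, ht.2.ne⟩

/-- Given a right regulated `g : [a,b] → E` and a well-ordered decomposition of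
`[a,b)` into intervals `[β, S β)` on which the oscillation of `g` is at most
`ε`, the step mapping `g_ε` built from the right limits of `g` satisfies
`‖g_ε t − g t‖ ≤ ε` off `Λ`, and `g_ε − g` is Bochner integrable on `[a,b]`. -/
theorem step_approximation_bochner {E : Type*}
    [NormedAddCommGroup E] [NormedSpace ℝ E] [CompleteSpace E]
    (a b : ℝ) (hab : a < b) (g : ℝ → E)
    (hg : ∀ x ∈ Set.Ico a b, ∃ L : E,
      Filter.Tendsto g (nhdsWithin x (Set.Ioi x)) (nhds L))
    (ε : ℝ) (hε : 0 < ε)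
    (Λ : Set ℝ) (hΛ : Λ ⊆ Set.Icc a b)
    (hwo : ∀ s : Set ℝ, s ⊆ Λ → s.Nonempty → ∃ m ∈ s, ∀ x ∈ s, m ≤ x)
    (ha : a ∈ Λ) (hb : b ∈ Λ) (hmin : ∀ x ∈ Λ, a ≤ x) (hmax : ∀ x ∈ Λ, x ≤ b)
    (S : ℝ → ℝ)
    (hS : ∀ β ∈ Λ \ {b}, S β ∈ Λ ∧ β < S β ∧ ∀ x ∈ Λ, β < x → S β ≤ x)
    (hunion : Set.Ico a b = ⋃ β ∈ Λ \ {b}, Set.Ico β (S β))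
    (hdisj : Set.PairwiseDisjoint (Λ \ {b}) (fun β => Set.Ico β (S β)))
    (hosc : ∀ β ∈ Λ \ {b}, ∀ s ∈ Set.Ioo β (S β), ∀ t ∈ Set.Ioo β (S β),
      ‖g s - g t‖ ≤ ε)
    (L : ℝ → E)
    (hL : ∀ β ∈ Λ \ {b},
      Filter.Tendsto g (nhdsWithin β (Set.Ioi β)) (nhds (L β)))
    (gε : ℝ → E)
    (hgε : ∀ β ∈ Λ \ {b}, ∀ t ∈ Set.Ico β (S β), gε t = L β)
    (hgεb : gε b = g b) :
    (∀ t ∈ Set.Ico a b, t ∉ Λ → ‖gε t - g t‖ ≤ ε) ∧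
      IntegrableOn (fun t => gε t - g t) (Set.Icc a b) :=
  step_approximation_bochner_general a b g hg ε Λ S hS hunion hdisj hosc L hL gε hgε
end

section
/- Let g : [a,c) → E (E a Banach space, −∞ < a < c ≤ ∞) be locally Bochner integrable, and let Λ ⊆ [a,c) be a countable set with a family (z_λ)_{λ∈Λ} in E such that Σ_{λ∈Λ, λ<t} ‖z_λ‖ < ∞ for every t ∈ [a,c). Define u(t) = Σ_{λ∈Λ, λ<t} z_λ + ∫_a^t g(s) ds. Then for every λ ∈ Λ that is isolated from the right in Λ (i.e., (λ, λ+δ) ∩ Λ = ∅ for some δ > 0), the right limit u(λ⁺) exists and u(λ⁺) − u(λ) = z_λ. -/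
/-!
Right after an impulse time `l` that is isolated from the right in `Λ`, the sum over
`{λ ∈ Λ | λ < t}` is the sum over `{λ ∈ Λ | λ < l}` plus the single new term `z l`, so it is
constant on some interval `(l, l + ε)`; the jump of `u` at `l` is therefore `z l`, because the
primitive `t ↦ ∫ s in a..t, g s` of a locally integrable function is continuous.
-/

open MeasureTheory Filter Topology Set

theorem setOf_mem_and_lt_eq_union_singleton {α : Type*} [LinearOrder α] {Λ : Set α} {l t : α}
    (hl : l ∈ Λ) (hlt : l < t) (hgap : ∀ x ∈ Ioo l t, x ∉ Λ) :
    {x | x ∈ Λ ∧ x < t} = {x | x ∈ Λ ∧ x < l} ∪ {l} := by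
  ext x
  simp only [mem_ofPred_eq, mem_union, mem_singleton_iff]
  constructor
  · rintro ⟨hxΛ, hxt⟩
    rcases lt_trichotomy x l with hxl | rfl | hlx
    · exact Or.inl ⟨hxΛ, hxl⟩
    · exact Or.inr rfl
    · exact absurd hxΛ (hgap x ⟨hlx, hxt⟩)
  · rintro (⟨hxΛ, hxl⟩ | rfl)
    · exact ⟨hxΛ, hxl.trans hlt⟩
    · exact ⟨hl, hlt⟩

theorem tsum_mem_and_lt_eq_add_of_gap {α E : Type*} [LinearOrder α] [AddCommMonoid E]
    [TopologicalSpace E] [ContinuousAdd E] [T2Space E] {Λ : Set α} {z : α → E} {l t : α}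
    (hl : l ∈ Λ) (hlt : l < t) (hgap : ∀ x ∈ Ioo l t, x ∉ Λ)
    (hz : Summable fun x : {x // x ∈ Λ ∧ x < l} => z x.1) :
    ∑' x : {x // x ∈ Λ ∧ x < t}, z x.1 = (∑' x : {x // x ∈ Λ ∧ x < l}, z x.1) + z l := by
  have hdisj : Disjoint {x | x ∈ Λ ∧ x < l} ({l} : Set α) :=
    disjoint_singleton_right.2 fun h => lt_irrefl l h.2
  change ∑' x : ↥{x | x ∈ Λ ∧ x < t}, z x = _
  rw [setOf_mem_and_lt_eq_union_singleton hl hlt hgap,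
    Summable.tsum_union_disjoint (f := z) hdisj hz ((finite_singleton l).summable z),
    tsum_singleton]
  rfl

theorem tendsto_intervalIntegral_nhdsGT {E : Type*} [NormedAddCommGroup E] [NormedSpace ℝ E]
    {g : ℝ → E} {a b l : ℝ} (hg : IntegrableOn g (Icc a b)) (hal : a ≤ l) (hlb : l < b) :
    Tendsto (fun t => ∫ s in a..t, g s) (𝓝[>] l) (𝓝 (∫ s in a..l, g s)) := by
  have hab : a ≤ b := hal.trans hlb.le
  rw [← uIcc_of_le hab] at hg
  have hcont := intervalIntegral.continuousOn_primitive_interval hg l (by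
    rw [uIcc_of_le hab]; exact ⟨hal, hlb.le⟩)
  refine hcont.tendsto.mono_left (nhdsWithin_le_of_mem ?_)
  rw [uIcc_of_le hab]
  exact mem_of_superset (Ioo_mem_nhdsGT hlb) (Ioo_subset_Icc_self.trans (Icc_subset_Icc_left hal))

theorem impulsive_solution_jump_general {E : Type*}
    [NormedAddCommGroup E] [NormedSpace ℝ E] [CompleteSpace E]
    (a : ℝ) (c : EReal)
    (D : Set ℝ) (hD : D = {t : ℝ | a ≤ t ∧ (t : EReal) < c})
    (g : ℝ → E) (hg : ∀ t ∈ D, IntegrableOn g (Set.Icc a t))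
    (Λ : Set ℝ) (hΛ : Λ ⊆ D)
    (z : ℝ → E)
    (hsum : ∀ t ∈ D, Summable (fun l : {x : ℝ // x ∈ Λ ∧ x < t} => ‖z l.1‖))
    (u : ℝ → E)
    (hu : ∀ t ∈ D,
      u t = (∑' l : {x : ℝ // x ∈ Λ ∧ x < t}, z l.1) + ∫ s in a..t, g s) :
    ∀ l ∈ Λ, (∃ δ > (0 : ℝ), ∀ x ∈ Set.Ioo l (l + δ), x ∉ Λ) →
      Filter.Tendsto u (nhdsWithin l (Set.Ioi l)) (nhds (u l + z l)) := by
  rintro l hlΛ ⟨δ, hδ, hgap⟩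
  have hlD := hΛ hlΛ
  obtain ⟨hal, hlc⟩ : a ≤ l ∧ (l : EReal) < c := by rwa [hD] at hlD
  obtain ⟨b, hlb, hbc⟩ := EReal.lt_iff_exists_real_btwn.1 hlc
  have hlb : l < b := EReal.coe_lt_coe_iff.1 hlb
  have hbD : b ∈ D := by rw [hD]; exact ⟨hal.trans hlb.le, hbc⟩
  have hu_near : ∀ t ∈ Ioo l (min (l + δ) b),
      u t = (u l + z l) + ((∫ s in a..t, g s) - ∫ s in a..l, g s) := by
    rintro t ⟨hlt, htm⟩
    have htD : t ∈ D := by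
      rw [hD]
      exact ⟨hal.trans hlt.le,
        (EReal.coe_lt_coe_iff.2 (htm.trans_le (min_le_right _ _))).trans hbc⟩
    rw [hu t htD, hu l hlD, tsum_mem_and_lt_eq_add_of_gap hlΛ hlt
      (fun x hx => hgap x ⟨hx.1, hx.2.trans (htm.trans_le (min_le_left _ _))⟩)
      (hsum l hlD).of_norm]
    abel
  have hlim : Tendsto (fun t => (u l + z l) + ((∫ s in a..t, g s) - ∫ s in a..l, g s))
      (𝓝[>] l) (𝓝 (u l + z l)) := by
    simpa using tendsto_const_nhds.add
      ((tendsto_intervalIntegral_nhdsGT (hg b hbD) hal hlb).sub_const (∫ s in a..l, g s))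
  refine hlim.congr' ?_
  filter_upwards [Ioo_mem_nhdsGT (lt_min (lt_add_of_pos_right l hδ) hlb)] with t ht
  exact (hu_near t ht).symm

/-- For `u(t) = Σ_{λ∈Λ, λ<t} z λ + ∫_a^t g`, with `g` locally Bochner
integrable and the impulses absolutely summable over initial segments, the right
limit of `u` exists at every `λ ∈ Λ` isolated from the right in `Λ`, and equals
`u λ + z λ`, i.e. the jump is `z λ`. -/
theorem impulsive_solution_jump {E : Type*}
    [NormedAddCommGroup E] [NormedSpace ℝ E] [CompleteSpace E]
    (a : ℝ) (c : EReal) (hac : (a : EReal) < c)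
    (D : Set ℝ) (hD : D = {t : ℝ | a ≤ t ∧ (t : EReal) < c})
    (g : ℝ → E) (hg : ∀ t ∈ D, IntegrableOn g (Set.Icc a t))
    (Λ : Set ℝ) (hΛ : Λ ⊆ D) (hΛc : Λ.Countable)
    (z : ℝ → E)
    (hsum : ∀ t ∈ D, Summable (fun l : {x : ℝ // x ∈ Λ ∧ x < t} => ‖z l.1‖))
    (u : ℝ → E)
    (hu : ∀ t ∈ D,
      u t = (∑' l : {x : ℝ // x ∈ Λ ∧ x < t}, z l.1) + ∫ s in a..t, g s) :
    ∀ l ∈ Λ, (∃ δ > (0 : ℝ), ∀ x ∈ Set.Ioo l (l + δ), x ∉ Λ) →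
      Filter.Tendsto u (nhdsWithin l (Set.Ioi l)) (nhds (u l + z l)) :=
  impulsive_solution_jump_general a c D hD g hg Λ hΛ z hsum u hu
end
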